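/- arXiv:2403.11938 — 4 statements merged into one kernel-verified Lean document; each statement's English description precedes it below -/
import Mathlib

section
/- If a square matrix A satisfies C A^{k} B = 0 for all k ≥ r and C A^{r−1} B = K with K of full column rank c, then the controllability matrix [A^{r−1}B, ..., AB, B] has rank at least r·c, and hence A has size at least r·c. -/
open Matrix Module

lemma aux_inj {a b : Type*} [Fintype a] [Fintype b] (M : Matrix a b ℝ)
    (h : M.rank = Fintype.card b) : ∀ v, M.mulVec v = 0 → v = 0 := by
  intro v hv
  have h1 := M.mulVecLin.finrank_range_add_finrank_ker
  rw [Module.finrank_fintype_fun_eq_card] at h1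
  rw [Matrix.rank] at h
  have hk : finrank ℝ (LinearMap.ker M.mulVecLin) = 0 := by omega
  have hb : LinearMap.ker M.mulVecLin = ⊥ := Submodule.finrank_eq_zero.mp hk
  have : v ∈ LinearMap.ker M.mulVecLin := by
    simpa [LinearMap.mem_ker, Matrix.mulVecLin_apply] using hv
  rw [hb] at this
  simpa using this

lemma aux_rank {a b : Type*} [Fintype a] [Fintype b] (M : Matrix a b ℝ)
    (h : ∀ v, M.mulVec v = 0 → v = 0) : M.rank = Fintype.card b := by
  have hb : LinearMap.ker M.mulVecLin = ⊥ := by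
    rw [LinearMap.ker_eq_bot']
    intro v hv
    exact h v (by simpa [Matrix.mulVecLin_apply] using hv)
  have h1 := M.mulVecLin.finrank_range_add_finrank_ker
  rw [Module.finrank_fintype_fun_eq_card, hb, finrank_bot] at h1
  rw [Matrix.rank]
  omega

/-- If CA^kB = 0 for all k ≥ r and CA^{r−1}B has full column rank m, then the reversed
controllability matrix [A^{r−1}B ... B] has rank r·m, hence n ≥ r·m. -/
theorem stmt7 (n m p r : ℕ) (hr : 0 < r)
    (A : Matrix (Fin n) (Fin n) ℝ) (B : Matrix (Fin n) (Fin m) ℝ)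
    (C : Matrix (Fin p) (Fin n) ℝ)
    (h0 : ∀ k, r ≤ k → C * A ^ k * B = 0)
    (hK : (C * A ^ (r - 1) * B).rank = m)
    (Ctrb : Matrix (Fin n) (Fin r × Fin m) ℝ)
    (hCtrb : ∀ i (q : Fin r × Fin m), Ctrb i q = (A ^ (r - 1 - (q.1 : ℕ)) * B) i q.2) :
    Ctrb.rank = r * m ∧ r * m ≤ n := by
  have hKinj : ∀ v, (C * A ^ (r - 1) * B).mulVec v = 0 → v = 0 := by
    intro v hv
    exact aux_inj _ (by rwa [Fintype.card_fin]) v hv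
  have hx : ∀ x, Ctrb.mulVec x = 0 → x = 0 := by
    intro x hx
    -- entry computation
    have hentry : ∀ (s : ℕ) i (q : Fin r × Fin m),
        (C * A ^ s * Ctrb) i q = (C * A ^ (s + (r - 1 - (q.1 : ℕ))) * B) i q.2 := by
      intro s i q
      have h1 : (C * A ^ s * Ctrb) i q
          = ∑ k, (C * A ^ s) i k * (A ^ (r - 1 - (q.1 : ℕ)) * B) k q.2 := by
        rw [Matrix.mul_apply]
        exact Finset.sum_congr rfl fun k _ => by rw [hCtrb]
      rw [h1, ← Matrix.mul_apply, ← Matrix.mul_assoc, Matrix.mul_assoc C, ← pow_add]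
    have hs : ∀ (s : ℕ) i,
        ∑ j' : Fin r, ∑ l, (C * A ^ (s + (r - 1 - (j' : ℕ))) * B) i l * x (j', l) = 0 := by
      intro s i
      have h2 : (C * A ^ s * Ctrb).mulVec x = 0 := by
        rw [← Matrix.mulVec_mulVec, hx, Matrix.mulVec_zero]
      have h3 := congrFun h2 i
      simp only [Matrix.mulVec, dotProduct, Pi.zero_apply] at h3
      rw [← h3, Fintype.sum_prod_type]
      exact Finset.sum_congr rfl fun j' _ => Finset.sum_congr rfl fun l _ => by
        rw [hentry]
    -- downward induction
    have key : ∀ d : ℕ, ∀ j : Fin r, (r - 1 - (j : ℕ)) ≤ d → ∀ l, x (j, l) = 0 := by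
      intro d
      induction d using Nat.strong_induction_on with
      | _ d ih =>
        intro j hj l
        have hjlt : (j : ℕ) < r := j.isLt
        have hmain : (C * A ^ (r - 1) * B).mulVec (fun l => x (j, l)) = 0 := by
          funext i
          have h4 := hs (j : ℕ) i
          rw [Finset.sum_eq_single j] at h4
          · simp only [Matrix.mulVec, dotProduct, Pi.zero_apply]
            rw [← h4]
            exact Finset.sum_congr rfl fun l' _ => by
              have he : (j : ℕ) + (r - 1 - (j : ℕ)) = r - 1 := by omega
              rw [he]
          · intro j' _ hne
            have hne' : (j' : ℕ) ≠ (j : ℕ) := fun h => hne (Fin.ext h)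
            have hj'lt : (j' : ℕ) < r := j'.isLt
            rcases Nat.lt_or_ge (j : ℕ) (j' : ℕ) with hlt | hgt
            · -- j' > j : x (j', l') = 0 by ih
              apply Finset.sum_eq_zero
              intro l' _
              have : x (j', l') = 0 := by
                apply ih (r - 1 - (j' : ℕ)) (by omega) j' le_rfl
              rw [this, mul_zero]
            · -- j' < j : matrix is zero
              apply Finset.sum_eq_zero
              intro l' _
              have hz : C * A ^ ((j : ℕ) + (r - 1 - (j' : ℕ))) * B = 0 :=
                h0 _ (by omega)
              rw [hz]
              simp
          · intro hjmem
            exact absurd (Finset.mem_univ j) hjmem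
        have := hKinj _ hmain
        exact congrFun this l
    funext q
    rcases q with ⟨j, l⟩
    exact key (r - 1 - (j : ℕ)) j le_rfl l
  constructor
  · have := aux_rank Ctrb hx
    rwa [Fintype.card_prod, Fintype.card_fin, Fintype.card_fin] at this
  · have h5 := Ctrb.rank_le_card_height
    rw [Fintype.card_fin] at h5
    have := aux_rank Ctrb hx
    rw [Fintype.card_prod, Fintype.card_fin, Fintype.card_fin] at this
    omega
end

section
/- Any Roesser realization of a 2-D convolutional layer whose leading kernel coefficient K[r₁,r₂] has full column rank c_in, with c_in = c_out, has total state dimension at least (r₁+r₂)·c_in. -/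
/-!
Feed the realization inputs supported on the `L = r₁ + r₂` antidiagonals `m ≤ i₁ + i₂ < m + L`,
in the rows `i₁ < m`. Beyond the band the state evolves without input, so the outputs in the rows
`< m + r₁` beyond the band are a linear function of the `(m + r₁)(n₁ + n₂)` state coordinates on
the antidiagonal `m + L`. On the other hand, since `K r₁ r₂` is injective, the convolution is
triangular for the antidiagonal order, so the input is recovered from its outputs at the points
shifted by `(r₁, r₂)`, all of which lie beyond the band. Hence `L m c ≤ (m + r₁)(n₁ + n₂)` for
every `m`, and letting `m → ∞` gives `L c ≤ n₁ + n₂`.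
-/

open Matrix Module LinearMap

variable {p q : ℕ}

theorem LinearMap.exists_comp_eq_of_ker_le {K V F W : Type*} [Field K]
    [AddCommGroup V] [Module K V] [AddCommGroup F] [Module K F] [AddCommGroup W] [Module K W]
    (β : V →ₗ[K] F) (ω : V →ₗ[K] W) (h : ker β ≤ ker ω) : ∃ g : F →ₗ[K] W, g ∘ₗ β = ω := by
  obtain ⟨g, hg⟩ := exists_extend ((ker β).liftQ ω h ∘ₗ β.quotKerEquivRange.symm.toLinearMap)
  refine ⟨g, LinearMap.ext fun z => ?_⟩
  have := congr($hg ⟨β z, mem_range_self β z⟩)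
  simpa only [comp_apply, Submodule.subtype_apply, LinearEquiv.coe_coe,
    quotKerEquivRange_symm_apply_image, Submodule.mkQ_apply, Submodule.liftQ_apply] using this

theorem finrank_le_of_range_le_range_of_ker_le {K V W Z F : Type*} [Field K]
    [AddCommGroup V] [Module K V] [AddCommGroup W] [Module K W] [AddCommGroup Z] [Module K Z]
    [AddCommGroup F] [Module K F] [FiniteDimensional K F]
    {f : V →ₗ[K] W} (hf : Function.Injective f) {β : Z →ₗ[K] F} {ω : Z →ₗ[K] W}
    (hker : ker β ≤ ker ω) (hrange : range f ≤ range ω) : finrank K V ≤ finrank K F := by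
  obtain ⟨g, rfl⟩ := β.exists_comp_eq_of_ker_le ω hker
  calc finrank K V = finrank K (range f) := (finrank_range_of_inj hf).symm
    _ ≤ finrank K (range g) := Submodule.finrank_mono (hrange.trans (range_comp_le_range β g))
    _ ≤ finrank K F := finrank_range_le g

def conv2d (r₁ r₂ : ℕ) (K : ℕ → ℕ → Matrix (Fin q) (Fin p) ℝ) :
    (ℕ → ℕ → Fin p → ℝ) →ₗ[ℝ] ℕ → ℕ → Fin q → ℝ where
  toFun u i₁ i₂ := ∑ t₁ ∈ Finset.range (r₁ + 1), ∑ t₂ ∈ Finset.range (r₂ + 1),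
    if t₁ ≤ i₁ ∧ t₂ ≤ i₂ then K t₁ t₂ *ᵥ u (i₁ - t₁) (i₂ - t₂) else 0
  map_add' u w := by
    funext i₁ i₂
    simp only [Pi.add_apply, mulVec_add, ← Finset.sum_add_distrib, ite_add_ite, add_zero]
  map_smul' a u := by
    funext i₁ i₂
    simp only [Pi.smul_apply, mulVec_smul, Finset.smul_sum, smul_ite, smul_zero, RingHom.id_apply]

section conv2d

variable {r₁ r₂ : ℕ} {K : ℕ → ℕ → Matrix (Fin q) (Fin p) ℝ}

theorem conv2d_apply_add_of_eq_zero_above {u : ℕ → ℕ → Fin p → ℝ} {i₁ i₂ : ℕ}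
    (hu : ∀ j₁ j₂, i₁ + i₂ < j₁ + j₂ → u j₁ j₂ = 0) :
    conv2d r₁ r₂ K u (i₁ + r₁) (i₂ + r₂) = K r₁ r₂ *ᵥ u i₁ i₂ := by
  show ∑ t₁ ∈ Finset.range (r₁ + 1), ∑ t₂ ∈ Finset.range (r₂ + 1), _ = _
  rw [← Finset.sum_product', Finset.sum_eq_single_of_mem (r₁, r₂) (by simp)]
  · simp
  · rintro ⟨t₁, t₂⟩ ht hne
    simp only [Finset.mem_product, Finset.mem_range] at ht
    rw [if_pos (by omega), hu _ _ (by grind), mulVec_zero]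

theorem eq_zero_of_conv2d_apply_add_eq_zero (hK : Function.Injective (K r₁ r₂).mulVec)
    {u : ℕ → ℕ → Fin p → ℝ} {S : ℕ → ℕ → Prop} {M : ℕ}
    (hSM : ∀ i₁ i₂, S i₁ i₂ → i₁ + i₂ < M) (hu : ∀ i₁ i₂, ¬ S i₁ i₂ → u i₁ i₂ = 0)
    (hconv : ∀ i₁ i₂, S i₁ i₂ → conv2d r₁ r₂ K u (i₁ + r₁) (i₂ + r₂) = 0) : u = 0 := by
  suffices h : ∀ k i₁ i₂, M ≤ i₁ + i₂ + k → u i₁ i₂ = 0 from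
    funext fun i₁ => funext fun i₂ => h M i₁ i₂ (by omega)
  intro k
  induction k with
  | zero => exact fun i₁ i₂ hi => hu i₁ i₂ fun hS => absurd (hSM i₁ i₂ hS) (by omega)
  | succ k ih =>
    intro i₁ i₂ hi
    by_cases hS : S i₁ i₂
    · apply hK
      rw [← conv2d_apply_add_of_eq_zero_above fun j₁ j₂ hj => ih j₁ j₂ (by omega), hconv i₁ i₂ hS,
        mulVec_zero]
    · exact hu i₁ i₂ hS

end conv2d

def sampleAt {ι M : Type*} [AddCommGroup M] [Module ℝ M] (P : ι → ℕ × ℕ) :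
    (ℕ → ℕ → M) →ₗ[ℝ] ι → M where
  toFun y j := y (P j).1 (P j).2
  map_add' _ _ := rfl
  map_smul' _ _ := rfl

def bandInput (L m : ℕ) : (Fin L × Fin m → Fin p → ℝ) →ₗ[ℝ] ℕ → ℕ → Fin p → ℝ where
  toFun v i₁ i₂ :=
    if h : i₁ < m ∧ m ≤ i₁ + i₂ ∧ i₁ + i₂ < m + L then v (⟨i₁ + i₂ - m, by omega⟩, ⟨i₁, h.1⟩) else 0
  map_add' v w := by
    funext i₁ i₂
    simp only [Pi.add_apply, dite_add_dite, add_zero]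
  map_smul' a v := by
    funext i₁ i₂
    simp only [Pi.smul_apply, smul_dite, smul_zero, RingHom.id_apply]

theorem bandInput_apply {L m : ℕ} (v : Fin L × Fin m → Fin p → ℝ) (s : Fin L) (a : Fin m) :
    bandInput L m v a (m + s - a) = v (s, a) := by
  have := a.isLt
  simp only [bandInput, LinearMap.coe_mk, AddHom.coe_mk]
  rw [dif_pos (by omega)]
  congr
  omega

-- the input point `(a, m + s - a)` of index `(s, a)`, shifted by `(r₁, r₂)`
def bandCorner (r₁ r₂ L m : ℕ) (x : Fin L × Fin m) : ℕ × ℕ := (x.2 + r₁, m + x.1 - x.2 + r₂)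

theorem injective_sample_conv2d_bandInput {r₁ r₂ : ℕ} {K : ℕ → ℕ → Matrix (Fin q) (Fin p) ℝ}
    (hK : Function.Injective (K r₁ r₂).mulVec) (L m : ℕ) :
    Function.Injective (sampleAt (bandCorner r₁ r₂ L m) ∘ₗ conv2d r₁ r₂ K ∘ₗ bandInput L m) := by
  rw [← ker_eq_bot, eq_bot_iff]
  intro v hv
  have hu : bandInput L m v = 0 := by
    refine eq_zero_of_conv2d_apply_add_eq_zero hK
      (S := fun i₁ i₂ => i₁ < m ∧ m ≤ i₁ + i₂ ∧ i₁ + i₂ < m + L) (M := m + L)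
      (fun _ _ h => h.2.2) (fun i₁ i₂ h => dif_neg h) fun i₁ i₂ h => ?_
    have hi₂ : m + (i₁ + i₂ - m) - i₁ = i₂ := by omega
    simpa [sampleAt, bandCorner, hi₂] using
      congr_fun (mem_ker.1 hv) (⟨i₁ + i₂ - m, by omega⟩, ⟨i₁, h.1⟩)
  funext x
  rw [← bandInput_apply v, hu]
  rfl

section Roesser

variable {n₁ n₂ : ℕ} (A₁₁ : Matrix (Fin n₁) (Fin n₁) ℝ) (A₁₂ : Matrix (Fin n₁) (Fin n₂) ℝ)
    (A₂₁ : Matrix (Fin n₂) (Fin n₁) ℝ) (A₂₂ : Matrix (Fin n₂) (Fin n₂) ℝ)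
    (B₁ : Matrix (Fin n₁) (Fin p) ℝ) (B₂ : Matrix (Fin n₂) (Fin p) ℝ)
    (C₁ : Matrix (Fin q) (Fin n₁) ℝ) (C₂ : Matrix (Fin q) (Fin n₂) ℝ) (D : Matrix (Fin q) (Fin p) ℝ)

def IsRoesserRealization (T : (ℕ → ℕ → Fin p → ℝ) → ℕ → ℕ → Fin q → ℝ) : Prop :=
  ∀ u : ℕ → ℕ → Fin p → ℝ, ∃ x₁ : ℕ → ℕ → Fin n₁ → ℝ, ∃ x₂ : ℕ → ℕ → Fin n₂ → ℝ,
    (∀ i₂, x₁ 0 i₂ = 0) ∧ (∀ i₁, x₂ i₁ 0 = 0) ∧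
    (∀ i₁ i₂, x₁ (i₁ + 1) i₂ = A₁₁ *ᵥ x₁ i₁ i₂ + A₁₂ *ᵥ x₂ i₁ i₂ + B₁ *ᵥ u i₁ i₂) ∧
    (∀ i₁ i₂, x₂ i₁ (i₂ + 1) = A₂₁ *ᵥ x₁ i₁ i₂ + A₂₂ *ᵥ x₂ i₁ i₂ + B₂ *ᵥ u i₁ i₂) ∧
    (∀ i₁ i₂, C₁ *ᵥ x₁ i₁ i₂ + C₂ *ᵥ x₂ i₁ i₂ + D *ᵥ u i₁ i₂ = T u i₁ i₂)

def freeTrajectories (N : ℕ) : Submodule ℝ ((ℕ → ℕ → Fin n₁ → ℝ) × (ℕ → ℕ → Fin n₂ → ℝ)) where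
  carrier := {x | (∀ i₂, x.1 0 i₂ = 0) ∧ (∀ i₁, x.2 i₁ 0 = 0) ∧ ∀ i₁ i₂, N ≤ i₁ + i₂ →
    x.1 (i₁ + 1) i₂ = A₁₁ *ᵥ x.1 i₁ i₂ + A₁₂ *ᵥ x.2 i₁ i₂ ∧
    x.2 i₁ (i₂ + 1) = A₂₁ *ᵥ x.1 i₁ i₂ + A₂₂ *ᵥ x.2 i₁ i₂}
  add_mem' {x y} hx hy := by
    refine ⟨fun i₂ => ?_, fun i₁ => ?_, fun i₁ i₂ hi => ?_⟩
    · simp [hx.1, hy.1]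
    · simp [hx.2.1, hy.2.1]
    · simp only [Prod.fst_add, Prod.snd_add, Pi.add_apply, mulVec_add, (hx.2.2 i₁ i₂ hi).1,
        (hx.2.2 i₁ i₂ hi).2, (hy.2.2 i₁ i₂ hi).1, (hy.2.2 i₁ i₂ hi).2]
      constructor <;> abel
  zero_mem' := by simp
  smul_mem' a x hx := by
    refine ⟨fun i₂ => ?_, fun i₁ => ?_, fun i₁ i₂ hi => ?_⟩
    · simp [hx.1]
    · simp [hx.2.1]
    · simp [mulVec_smul, (hx.2.2 i₁ i₂ hi).1, (hx.2.2 i₁ i₂ hi).2]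

def stateOutput : (ℕ → ℕ → Fin n₁ → ℝ) × (ℕ → ℕ → Fin n₂ → ℝ) →ₗ[ℝ] ℕ → ℕ → Fin q → ℝ where
  toFun x i₁ i₂ := C₁ *ᵥ x.1 i₁ i₂ + C₂ *ᵥ x.2 i₁ i₂
  map_add' x y := by
    funext i₁ i₂
    simp only [Prod.fst_add, Prod.snd_add, Pi.add_apply, mulVec_add]
    abel
  map_smul' a x := by
    funext i₁ i₂
    simp [mulVec_smul]

variable {A₁₁ A₁₂ A₂₁ A₂₂} in
theorem eq_zero_of_mem_freeTrajectories {N R : ℕ}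
    {x : (ℕ → ℕ → Fin n₁ → ℝ) × (ℕ → ℕ → Fin n₂ → ℝ)} (hx : x ∈ freeTrajectories A₁₁ A₁₂ A₂₁ A₂₂ N)
    (h₀ : ∀ i₁ i₂, i₁ < R → i₁ + i₂ = N → x.1 i₁ i₂ = 0 ∧ x.2 i₁ i₂ = 0)
    {i₁ i₂ : ℕ} (hi₁ : i₁ < R) (hi : N ≤ i₁ + i₂) : x.1 i₁ i₂ = 0 ∧ x.2 i₁ i₂ = 0 := by
  obtain ⟨ℓ, hℓ⟩ := Nat.exists_eq_add_of_le hi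
  clear hi
  induction ℓ generalizing i₁ i₂ with
  | zero => exact h₀ i₁ i₂ hi₁ hℓ
  | succ ℓ ih =>
    obtain ⟨hx₁, hx₂, hrec⟩ := hx
    constructor
    · cases i₁ with
      | zero => exact hx₁ i₂
      | succ i₁ =>
        obtain ⟨h₁, h₂⟩ := @ih i₁ i₂ (by omega) (by omega)
        rw [(hrec i₁ i₂ (by omega)).1, h₁, h₂, mulVec_zero, mulVec_zero, add_zero]
    · cases i₂ with
      | zero => exact hx₂ i₁
      | succ i₂ =>
        obtain ⟨h₁, h₂⟩ := @ih i₁ i₂ hi₁ (by omega)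
        rw [(hrec i₁ i₂ (by omega)).2, h₁, h₂, mulVec_zero, mulVec_zero, add_zero]

variable {A₁₁ A₁₂ A₂₁ A₂₂ B₁ B₂ C₁ C₂ D} in
theorem finrank_le_of_isRoesserRealization {T : (ℕ → ℕ → Fin p → ℝ) →ₗ[ℝ] ℕ → ℕ → Fin q → ℝ}
    (hT : IsRoesserRealization A₁₁ A₁₂ A₂₁ A₂₂ B₁ B₂ C₁ C₂ D T)
    {V ι : Type*} [AddCommGroup V] [Module ℝ V] (g : V →ₗ[ℝ] ℕ → ℕ → Fin p → ℝ) (P : ι → ℕ × ℕ)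
    {N R : ℕ} (hg : ∀ v i₁ i₂, N ≤ i₁ + i₂ → g v i₁ i₂ = 0)
    (hP : ∀ j, (P j).1 < R ∧ N ≤ (P j).1 + (P j).2)
    (hinj : Function.Injective (sampleAt P ∘ₗ T ∘ₗ g)) : finrank ℝ V ≤ R * (n₁ + n₂) := by
  set Z := freeTrajectories A₁₁ A₁₂ A₂₁ A₂₂ N
  let P₀ : Fin R → ℕ × ℕ := fun i => (i, N - i)
  -- in the rows `< R`, a free trajectory is determined by its states on the antidiagonal `N`
  have key := finrank_le_of_range_le_range_of_ker_le hinj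
    (β := (sampleAt P₀).prodMap (sampleAt P₀) ∘ₗ Z.subtype)
    (ω := sampleAt P ∘ₗ stateOutput C₁ C₂ ∘ₗ Z.subtype) ?_ ?_
  · simpa [finrank_prod, finrank_pi_fintype, mul_add] using key
  · intro x hx
    obtain ⟨hx₁, hx₂⟩ := Prod.ext_iff.1 (mem_ker.1 hx)
    have h₀ : ∀ i₁ i₂, i₁ < R → i₁ + i₂ = N → x.1.1 i₁ i₂ = 0 ∧ x.1.2 i₁ i₂ = 0 := by
      intro i₁ i₂ hi₁ hi
      obtain rfl : i₂ = N - i₁ := by omega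
      exact ⟨congr_fun hx₁ ⟨i₁, hi₁⟩, congr_fun hx₂ ⟨i₁, hi₁⟩⟩
    refine mem_ker.2 (funext fun j => ?_)
    obtain ⟨h₁, h₂⟩ := eq_zero_of_mem_freeTrajectories x.2 h₀ (hP j).1 (hP j).2
    simp [sampleAt, stateOutput, h₁, h₂]
  · rintro _ ⟨v, rfl⟩
    obtain ⟨x₁, x₂, h₁, h₂, hrec₁, hrec₂, hout⟩ := hT (g v)
    refine ⟨⟨(x₁, x₂), h₁, h₂, fun i₁ i₂ hi => ?_⟩, ?_⟩
    · simp [hrec₁, hrec₂, hg v i₁ i₂ hi]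
    · funext j
      simp [sampleAt, stateOutput, ← hout, hg v _ _ (hP j).2]

variable {A₁₁ A₁₂ A₂₁ A₂₂ B₁ B₂ C₁ C₂ D} in
theorem IsRoesserRealization.mul_le_of_conv2d {r₁ r₂ : ℕ} {K : ℕ → ℕ → Matrix (Fin q) (Fin p) ℝ}
    (hK : Function.Injective (K r₁ r₂).mulVec)
    (hT : IsRoesserRealization A₁₁ A₁₂ A₂₁ A₂₂ B₁ B₂ C₁ C₂ D (conv2d r₁ r₂ K)) (m : ℕ) :
    (r₁ + r₂) * p * m ≤ (m + r₁) * (n₁ + n₂) := by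
  have := finrank_le_of_isRoesserRealization hT (bandInput (r₁ + r₂) m)
    (bandCorner r₁ r₂ (r₁ + r₂) m) (N := m + (r₁ + r₂)) (R := m + r₁)
    (fun v i₁ i₂ hi => dif_neg (by omega)) (fun j => by simp only [bandCorner]; omega)
    (injective_sample_conv2d_bandInput hK _ m)
  simpa [finrank_pi_fintype, mul_right_comm] using this

end Roesser

theorem Nat.le_of_forall_mul_le_add_mul {a b r : ℕ} (h : ∀ m, a * m ≤ (m + r) * b) : a ≤ b := by
  by_contra! hab
  have := h (r * b + 1)
  nlinarith [Nat.mul_le_mul_right (r * b + 1) hab]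

theorem stmt9_general (c r₁ r₂ n₁ n₂ : ℕ)
    (K : ℕ → ℕ → Matrix (Fin c) (Fin c) ℝ)
    (hK : IsUnit (K r₁ r₂))
    (A₁₁ : Matrix (Fin n₁) (Fin n₁) ℝ) (A₁₂ : Matrix (Fin n₁) (Fin n₂) ℝ)
    (A₂₁ : Matrix (Fin n₂) (Fin n₁) ℝ) (A₂₂ : Matrix (Fin n₂) (Fin n₂) ℝ)
    (B₁ : Matrix (Fin n₁) (Fin c) ℝ) (B₂ : Matrix (Fin n₂) (Fin c) ℝ)
    (C₁ : Matrix (Fin c) (Fin n₁) ℝ) (C₂ : Matrix (Fin c) (Fin n₂) ℝ)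
    (D : Matrix (Fin c) (Fin c) ℝ)
    (hreal : ∀ u : ℕ → ℕ → Fin c → ℝ,
      ∃ x₁ : ℕ → ℕ → Fin n₁ → ℝ, ∃ x₂ : ℕ → ℕ → Fin n₂ → ℝ,
        (∀ i₂, x₁ 0 i₂ = 0) ∧ (∀ i₁, x₂ i₁ 0 = 0) ∧
        (∀ i₁ i₂, x₁ (i₁ + 1) i₂ =
          A₁₁.mulVec (x₁ i₁ i₂) + A₁₂.mulVec (x₂ i₁ i₂) + B₁.mulVec (u i₁ i₂)) ∧
        (∀ i₁ i₂, x₂ i₁ (i₂ + 1) =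
          A₂₁.mulVec (x₁ i₁ i₂) + A₂₂.mulVec (x₂ i₁ i₂) + B₂.mulVec (u i₁ i₂)) ∧
        (∀ i₁ i₂, C₁.mulVec (x₁ i₁ i₂) + C₂.mulVec (x₂ i₁ i₂) + D.mulVec (u i₁ i₂) =
          ∑ t₁ ∈ Finset.range (r₁ + 1), ∑ t₂ ∈ Finset.range (r₂ + 1),
            if t₁ ≤ i₁ ∧ t₂ ≤ i₂ then (K t₁ t₂).mulVec (u (i₁ - t₁) (i₂ - t₂)) else 0)) :
    (r₁ + r₂) * c ≤ n₁ + n₂ := by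
  have hT : IsRoesserRealization A₁₁ A₁₂ A₂₁ A₂₂ B₁ B₂ C₁ C₂ D (conv2d r₁ r₂ K) := hreal
  exact Nat.le_of_forall_mul_le_add_mul (hT.mul_le_of_conv2d (mulVec_injective_iff_isUnit.2 hK))

/-- Any Roesser realization of a 2-D convolutional layer with c_in = c_out = c and
invertible leading kernel coefficient K[r₁,r₂] has state dimension ≥ (r₁+r₂)·c. -/
theorem stmt9 (c r₁ r₂ n₁ n₂ : ℕ) (hc : 0 < c) (hr₁ : 0 < r₁) (hr₂ : 0 < r₂)
    (K : ℕ → ℕ → Matrix (Fin c) (Fin c) ℝ)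
    (hK : IsUnit (K r₁ r₂))
    (A₁₁ : Matrix (Fin n₁) (Fin n₁) ℝ) (A₁₂ : Matrix (Fin n₁) (Fin n₂) ℝ)
    (A₂₁ : Matrix (Fin n₂) (Fin n₁) ℝ) (A₂₂ : Matrix (Fin n₂) (Fin n₂) ℝ)
    (B₁ : Matrix (Fin n₁) (Fin c) ℝ) (B₂ : Matrix (Fin n₂) (Fin c) ℝ)
    (C₁ : Matrix (Fin c) (Fin n₁) ℝ) (C₂ : Matrix (Fin c) (Fin n₂) ℝ)
    (D : Matrix (Fin c) (Fin c) ℝ)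
    (hreal : ∀ u : ℕ → ℕ → Fin c → ℝ,
      ∃ x₁ : ℕ → ℕ → Fin n₁ → ℝ, ∃ x₂ : ℕ → ℕ → Fin n₂ → ℝ,
        (∀ i₂, x₁ 0 i₂ = 0) ∧ (∀ i₁, x₂ i₁ 0 = 0) ∧
        (∀ i₁ i₂, x₁ (i₁ + 1) i₂ =
          A₁₁.mulVec (x₁ i₁ i₂) + A₁₂.mulVec (x₂ i₁ i₂) + B₁.mulVec (u i₁ i₂)) ∧
        (∀ i₁ i₂, x₂ i₁ (i₂ + 1) =
          A₂₁.mulVec (x₁ i₁ i₂) + A₂₂.mulVec (x₂ i₁ i₂) + B₂.mulVec (u i₁ i₂)) ∧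
        (∀ i₁ i₂, C₁.mulVec (x₁ i₁ i₂) + C₂.mulVec (x₂ i₁ i₂) + D.mulVec (u i₁ i₂) =
          ∑ t₁ ∈ Finset.range (r₁ + 1), ∑ t₂ ∈ Finset.range (r₂ + 1),
            if t₁ ≤ i₁ ∧ t₂ ≤ i₂ then (K t₁ t₂).mulVec (u (i₁ - t₁) (i₂ - t₂)) else 0)) :
    (r₁ + r₂) * c ≤ n₁ + n₂ :=
  stmt9_general c r₁ r₂ n₁ n₂ K hK A₁₁ A₁₂ A₂₁ A₂₂ B₁ B₂ C₁ C₂ D hreal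
end

section
/- The specific Roesser realization with A₁₁ the block lower-shift on c_out-blocks of length r₁, A₂₂ the block upper-shift on c_in-blocks of length r₂, A₂₁ = 0, and A₁₂, B₁, C₂, D filled with kernel blocks K[t₁,t₂], has transfer function ∑_{j₁=0}^{r₁}∑_{j₂=0}^{r₂} K[j₁,j₂] z₁^{−j₁} z₂^{−j₂}. -/
/-!
The system matrix is block upper triangular, so its inverse is
`[[P⁻¹, P⁻¹ A₁₂ S⁻¹], [0, S⁻¹]]` with `P = z₁ - A₁₁`, `S = z₂ - A₂₂`, and the transfer function is
`C₁ P⁻¹ B₁ + C₁ P⁻¹ A₁₂ S⁻¹ B₂ + C₂ S⁻¹ B₂ + D`. The matrix `P` is `z₁` minus a block shift, hence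
block triangular with diagonal blocks `z₁ • 1` and invertible. Rather than inverting it, note that
the block row `E = [z₁^{-r₁} I, …, z₁^{-1} I]` satisfies `E P = C₁`, so `C₁ P⁻¹ = E`; since `A₂₂`
is the transposed shift and `B₂` the transpose of a `C₁`-shaped row, transposing gives `S⁻¹ B₂`.
The four terms are then the parts of the double sum with `j₁ = 0` or not and `j₂ = 0` or not.
-/

open Matrix Finset

namespace Matrix

section BlockShift

variable (𝕜 : Type*) [Field 𝕜] (r : ℕ) (ι : Type*) [DecidableEq ι]

def blockShift : Matrix (Fin r × ι) (Fin r × ι) 𝕜 :=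
  of fun p q => if (p.1 : ℕ) = q.1 + 1 ∧ p.2 = q.2 then 1 else 0

def lastBlockRow : Matrix ι (Fin r × ι) 𝕜 :=
  of fun o p => if (p.1 : ℕ) = r - 1 ∧ o = p.2 then 1 else 0

variable {𝕜}

def geomBlockRow (z : 𝕜) : Matrix ι (Fin r × ι) 𝕜 :=
  of fun o p => if o = p.2 then z⁻¹ ^ (r - p.1) else 0

variable {r ι}

theorem blockTriangular_smul_one_sub_blockShift (z : 𝕜) :
    (z • 1 - blockShift 𝕜 r ι).BlockTriangular fun p => OrderDual.toDual p.1 := by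
  intro p q hpq
  have hne : p ≠ q := by rintro rfl; exact lt_irrefl _ hpq
  rw [OrderDual.toDual_lt_toDual, Fin.lt_def] at hpq
  simp [blockShift, one_apply_ne hne]
  omega

theorem smul_one_sub_transpose_blockShift (z : 𝕜) :
    z • 1 - (blockShift 𝕜 r ι)ᵀ = (z • 1 - blockShift 𝕜 r ι)ᵀ := by
  rw [transpose_sub, transpose_smul, transpose_one]

variable [Fintype ι]

theorem isUnit_det_smul_one_sub_blockShift {z : 𝕜} (hz : z ≠ 0) :
    IsUnit (z • 1 - blockShift 𝕜 r ι).det := by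
  rw [(blockTriangular_smul_one_sub_blockShift z).det, isUnit_iff_ne_zero, prod_ne_zero_iff]
  intro a _
  have hblock : (z • 1 - blockShift 𝕜 r ι).toSquareBlock (fun p => OrderDual.toDual p.1) a =
      z • 1 := by
    refine Matrix.ext fun p q => ?_
    have hpq : (p.1.1 : ℕ) ≠ q.1.1 + 1 := by
      have := p.2.trans q.2.symm
      simp only [OrderDual.toDual_inj] at this
      omega
    simp [toSquareBlock, toSquareBlockProp, blockShift, hpq, one_apply, Subtype.ext_iff]
  rw [hblock, det_smul, det_one, mul_one]
  exact pow_ne_zero _ hz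

theorem geomBlockRow_mul_apply {κ : Type*} (z : 𝕜) (X : Matrix (Fin r × ι) κ 𝕜) (o : ι) (b : κ) :
    (geomBlockRow r ι z * X) o b = ∑ k : Fin r, z⁻¹ ^ (r - k) * X (k, o) b := by
  simp [geomBlockRow, mul_apply, Fintype.sum_prod_type, ite_mul]

theorem mul_transpose_geomBlockRow_apply {κ : Type*} (z : 𝕜) (Y : Matrix κ (Fin r × ι) 𝕜)
    (o : κ) (b : ι) :
    (Y * (geomBlockRow r ι z)ᵀ) o b = ∑ k : Fin r, Y o (k, b) * z⁻¹ ^ (r - k) := by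
  rw [← transpose_apply (Y * _), transpose_mul, transpose_transpose, geomBlockRow_mul_apply]
  simp only [transpose_apply, mul_comm]

theorem geomBlockRow_mul_blockShift {z : 𝕜} (hz : z ≠ 0) :
    geomBlockRow r ι z * blockShift 𝕜 r ι = z • geomBlockRow r ι z - lastBlockRow 𝕜 r ι := by
  refine Matrix.ext fun o q => ?_
  rw [geomBlockRow_mul_apply]
  simp only [blockShift, geomBlockRow, lastBlockRow, of_apply, mul_ite, mul_one, mul_zero,
    sub_apply, smul_apply, smul_eq_mul]
  by_cases ho : o = q.2
  swap
  · simp [ho]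
  simp only [ho, and_true, if_true]
  rw [Fin.sum_univ_eq_sum_range (fun k => if k = (q.1 : ℕ) + 1 then z⁻¹ ^ (r - k) else 0),
    sum_ite_eq']
  obtain ⟨m, hm⟩ : ∃ m, r - q.1 = m + 1 := ⟨r - q.1 - 1, by omega⟩
  rw [hm, pow_succ', ← mul_assoc, mul_inv_cancel₀ hz, one_mul]
  split_ifs with hnext hlast hlast <;> rw [mem_range] at hnext
  · omega
  · rw [sub_zero]; congr 1; omega
  · rw [show m = 0 by omega, pow_zero, sub_self]
  · omega

theorem geomBlockRow_mul_smul_one_sub_blockShift {z : 𝕜} (hz : z ≠ 0) :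
    geomBlockRow r ι z * (z • 1 - blockShift 𝕜 r ι) = lastBlockRow 𝕜 r ι := by
  rw [Matrix.mul_sub, Matrix.mul_smul, Matrix.mul_one, geomBlockRow_mul_blockShift hz,
    sub_sub_cancel]

theorem lastBlockRow_mul_inv {z : 𝕜} (hz : z ≠ 0) :
    lastBlockRow 𝕜 r ι * (z • 1 - blockShift 𝕜 r ι)⁻¹ = geomBlockRow r ι z := by
  rw [← geomBlockRow_mul_smul_one_sub_blockShift hz,
    mul_nonsing_inv_cancel_right _ _ (isUnit_det_smul_one_sub_blockShift hz)]

theorem inv_mul_transpose_lastBlockRow {z : 𝕜} (hz : z ≠ 0) :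
    (z • 1 - (blockShift 𝕜 r ι)ᵀ)⁻¹ * (lastBlockRow 𝕜 r ι)ᵀ = (geomBlockRow r ι z)ᵀ := by
  rw [smul_one_sub_transpose_blockShift, ← transpose_nonsing_inv, ← transpose_mul,
    lastBlockRow_mul_inv hz]

end BlockShift

end Matrix

theorem Finset.sum_range_succ_eq_add_sum_fin_sub {M : Type*} [AddCommMonoid M] (r : ℕ)
    (f : ℕ → M) : ∑ j ∈ range (r + 1), f j = f 0 + ∑ k : Fin r, f (r - k) := by
  rw [sum_range_succ', add_comm, Fin.sum_univ_eq_sum_range (fun k => f (r - k)),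
    ← sum_range_reflect (fun j => f (j + 1))]
  refine congrArg _ (sum_congr rfl fun j hj => ?_)
  rw [mem_range] at hj
  congr 1
  omega

theorem stmt10_general (r₁ r₂ cin cout : ℕ)
    (K : ℕ → ℕ → Matrix (Fin cout) (Fin cin) ℝ)
    (A₁₁ : Matrix (Fin r₁ × Fin cout) (Fin r₁ × Fin cout) ℝ)
    (A₁₂ : Matrix (Fin r₁ × Fin cout) (Fin r₂ × Fin cin) ℝ)
    (A₂₂ : Matrix (Fin r₂ × Fin cin) (Fin r₂ × Fin cin) ℝ)
    (B₁ : Matrix (Fin r₁ × Fin cout) (Fin cin) ℝ)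
    (B₂ : Matrix (Fin r₂ × Fin cin) (Fin cin) ℝ)
    (C₁ : Matrix (Fin cout) (Fin r₁ × Fin cout) ℝ)
    (C₂ : Matrix (Fin cout) (Fin r₂ × Fin cin) ℝ)
    (hA₁₁ : ∀ p q, A₁₁ p q = if (p.1 : ℕ) = (q.1 : ℕ) + 1 ∧ p.2 = q.2 then 1 else 0)
    (hA₁₂ : ∀ p q, A₁₂ p q = K (r₁ - (p.1 : ℕ)) (r₂ - (q.1 : ℕ)) p.2 q.2)
    (hA₂₂ : ∀ p q, A₂₂ p q = if (q.1 : ℕ) = (p.1 : ℕ) + 1 ∧ p.2 = q.2 then 1 else 0)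
    (hB₁ : ∀ p b, B₁ p b = K (r₁ - (p.1 : ℕ)) 0 p.2 b)
    (hB₂ : ∀ p b, B₂ p b = if (p.1 : ℕ) = r₂ - 1 ∧ p.2 = b then 1 else 0)
    (hC₁ : ∀ o p, C₁ o p = if (p.1 : ℕ) = r₁ - 1 ∧ o = p.2 then 1 else 0)
    (hC₂ : ∀ o p, C₂ o p = K 0 (r₂ - (p.1 : ℕ)) o p.2)
    (z₁ z₂ : ℝ) (hz₁ : z₁ ≠ 0) (hz₂ : z₂ ≠ 0) :
    fromCols C₁ C₂ *
        (fromBlocks (z₁ • 1 - A₁₁) (-A₁₂) 0 (z₂ • 1 - A₂₂))⁻¹ *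
        fromRows B₁ B₂ + K 0 0 =
      ∑ j₁ ∈ Finset.range (r₁ + 1), ∑ j₂ ∈ Finset.range (r₂ + 1),
        (z₁⁻¹ ^ j₁ * z₂⁻¹ ^ j₂) • K j₁ j₂ := by
  obtain rfl : A₁₁ = blockShift ℝ r₁ (Fin cout) := Matrix.ext hA₁₁
  obtain rfl : A₂₂ = (blockShift ℝ r₂ (Fin cin))ᵀ :=
    Matrix.ext fun p q => (hA₂₂ p q).trans (by simp [blockShift, eq_comm])
  obtain rfl : B₂ = (lastBlockRow ℝ r₂ (Fin cin))ᵀ :=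
    Matrix.ext fun p b => (hB₂ p b).trans (by simp [lastBlockRow, eq_comm])
  obtain rfl : C₁ = lastBlockRow ℝ r₁ (Fin cout) := Matrix.ext hC₁
  have hunit : IsUnit (z₁ • 1 - blockShift ℝ r₁ (Fin cout)) ↔
      IsUnit (z₂ • 1 - (blockShift ℝ r₂ (Fin cin))ᵀ) := by
    rw [smul_one_sub_transpose_blockShift, isUnit_transpose, isUnit_iff_isUnit_det,
      isUnit_iff_isUnit_det]
    exact iff_of_true (isUnit_det_smul_one_sub_blockShift hz₁)
      (isUnit_det_smul_one_sub_blockShift hz₂)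
  rw [inv_fromBlocks_zero₂₁_of_isUnit_iff _ _ _ hunit, fromCols_mul_fromBlocks,
    fromCols_mul_fromRows]
  simp only [Matrix.mul_zero, add_zero, Matrix.neg_mul, Matrix.mul_neg, neg_neg, Matrix.add_mul,
    Matrix.mul_assoc, inv_mul_transpose_lastBlockRow hz₂]
  rw [← Matrix.mul_assoc _ _ B₁, lastBlockRow_mul_inv hz₁,
    ← Matrix.mul_assoc (lastBlockRow ℝ r₁ (Fin cout)), lastBlockRow_mul_inv hz₁]
  refine Matrix.ext fun o b => ?_
  simp only [Matrix.add_apply, geomBlockRow_mul_apply, mul_transpose_geomBlockRow_apply, hA₁₂,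
    hB₁, hC₂, Matrix.sum_apply, Matrix.smul_apply, smul_eq_mul, sum_range_succ_eq_add_sum_fin_sub, pow_zero,
    one_mul, mul_one, sum_add_distrib, mul_sum]
  simp only [mul_comm (K _ _ o b), mul_assoc]
  abel

/-- The Theorem 1 Roesser realization has transfer function
∑_{j₁,j₂} K[j₁,j₂] z₁^{−j₁} z₂^{−j₂}. -/
theorem stmt10 (r₁ r₂ cin cout : ℕ) (hr₁ : 0 < r₁) (hr₂ : 0 < r₂)
    (K : ℕ → ℕ → Matrix (Fin cout) (Fin cin) ℝ)
    (A₁₁ : Matrix (Fin r₁ × Fin cout) (Fin r₁ × Fin cout) ℝ)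
    (A₁₂ : Matrix (Fin r₁ × Fin cout) (Fin r₂ × Fin cin) ℝ)
    (A₂₂ : Matrix (Fin r₂ × Fin cin) (Fin r₂ × Fin cin) ℝ)
    (B₁ : Matrix (Fin r₁ × Fin cout) (Fin cin) ℝ)
    (B₂ : Matrix (Fin r₂ × Fin cin) (Fin cin) ℝ)
    (C₁ : Matrix (Fin cout) (Fin r₁ × Fin cout) ℝ)
    (C₂ : Matrix (Fin cout) (Fin r₂ × Fin cin) ℝ)
    (hA₁₁ : ∀ p q, A₁₁ p q = if (p.1 : ℕ) = (q.1 : ℕ) + 1 ∧ p.2 = q.2 then 1 else 0)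
    (hA₁₂ : ∀ p q, A₁₂ p q = K (r₁ - (p.1 : ℕ)) (r₂ - (q.1 : ℕ)) p.2 q.2)
    (hA₂₂ : ∀ p q, A₂₂ p q = if (q.1 : ℕ) = (p.1 : ℕ) + 1 ∧ p.2 = q.2 then 1 else 0)
    (hB₁ : ∀ p b, B₁ p b = K (r₁ - (p.1 : ℕ)) 0 p.2 b)
    (hB₂ : ∀ p b, B₂ p b = if (p.1 : ℕ) = r₂ - 1 ∧ p.2 = b then 1 else 0)
    (hC₁ : ∀ o p, C₁ o p = if (p.1 : ℕ) = r₁ - 1 ∧ o = p.2 then 1 else 0)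
    (hC₂ : ∀ o p, C₂ o p = K 0 (r₂ - (p.1 : ℕ)) o p.2)
    (z₁ z₂ : ℝ) (hz₁ : z₁ ≠ 0) (hz₂ : z₂ ≠ 0) :
    fromCols C₁ C₂ *
        (fromBlocks (z₁ • 1 - A₁₁) (-A₁₂) 0 (z₂ • 1 - A₂₂))⁻¹ *
        fromRows B₁ B₂ + K 0 0 =
      ∑ j₁ ∈ Finset.range (r₁ + 1), ∑ j₂ ∈ Finset.range (r₂ + 1),
        (z₁⁻¹ ^ j₁ * z₂⁻¹ ^ j₂) • K j₁ j₂ :=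
  stmt10_general r₁ r₂ cin cout K A₁₁ A₁₂ A₂₂ B₁ B₂ C₁ C₂ hA₁₁ hA₁₂ hA₂₂ hB₁ hB₂ hC₁ hC₂ z₁ z₂ hz₁
    hz₂
end

section
/- The Roesser realization of Theorem 1 with zero boundary conditions reproduces the 2-D convolution output: for all inputs u and all indices (i₁,i₂), the Roesser output equals b + ∑_{t₁=0}^{r₁}∑_{t₂=0}^{r₂} K[t₁,t₂] u[i₁−t₁, i₂−t₂]. -/
/-!
The horizontal state `x₂` is a shift register: its block `ℓ` holds the input delayed by `r₂ - ℓ`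
steps in `i₂`. Hence `A₁₂ x₂ + B₁ u`, read at block `k`, is the 1-D convolution of the current
input row with kernel row `r₁ - k`, and `C₂ x₂ + D u` is the one with kernel row `0`. Through the
lower shift `A₁₁` the vertical state `x₁` accumulates these row convolutions along `i₁`, so its
last block, which `C₁` reads out, is the sum over `t₁ = 1, …, r₁` of the row-`t₁` convolution
delayed by `t₁` steps in `i₁`. Adding the row-`0` term gives the 2-D convolution.
-/

open Matrix Finset

section Delay

variable {α : Type*} [Zero α]

-- The sequence `w` extended by zero to negative indices, read `t` steps back from `i`.
def delay (w : ℕ → α) (t i : ℕ) : α := if t ≤ i then w (i - t) else 0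

@[simp] lemma delay_zero (w : ℕ → α) (i : ℕ) : delay w 0 i = w i := by simp [delay]

lemma delay_succ_succ (w : ℕ → α) (t i : ℕ) : delay w (t + 1) (i + 1) = delay w t i := by
  simp [delay]

lemma delay_of_lt (w : ℕ → α) {t i : ℕ} (h : i < t) : delay w t i = 0 := by
  simp [delay, Nat.not_le.2 h]

lemma delay_apply {ι β : Type*} [Zero β] (w : ℕ → ι → β) (t i : ℕ) (c : ι) : delay w t i c = delay (fun j => w j c) t i := by
  unfold delay; split_ifs <;> rfl

lemma shiftRegister_eq_delay {n : ℕ} (z : ℕ → Fin n → α) (w : ℕ → α) (h₀ : ∀ ℓ, z 0 ℓ = 0)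
    (hz : ∀ i ℓ, z (i + 1) ℓ = if h : (ℓ : ℕ) + 1 < n then z i ⟨ℓ + 1, h⟩ else w i) :
    ∀ i ℓ, z i ℓ = delay w (n - ℓ) i := by
  intro i
  induction i with
  | zero => intro ℓ; rw [h₀, delay_of_lt]; omega
  | succ i ih =>
    intro ℓ
    rw [hz]
    split_ifs with h
    · rw [ih, ← delay_succ_succ]; congr 1; simp only; omega
    · rw [show n - ℓ = 0 + 1 by omega, delay_succ_succ, delay_zero]

lemma accumulator_eq_sum_delay {β : Type*} [AddCommMonoid β] {n : ℕ} (z : ℕ → Fin n → β)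
    (g : ℕ → ℕ → β) (h₀ : ∀ k, z 0 k = 0)
    (hz : ∀ i k, z (i + 1) k = (if h : 0 < (k : ℕ) then z i ⟨k - 1, by omega⟩ else 0) + g i k) :
    ∀ i k, z i k = ∑ j ∈ range (k + 1), delay (fun m => g m (k - j)) (j + 1) i := by
  intro i
  induction i with
  | zero =>
    intro k
    rw [h₀, eq_comm]
    exact sum_eq_zero fun j _ => delay_of_lt _ (Nat.succ_pos j)
  | succ i ih =>
    intro k
    simp only [hz, sum_range_succ', delay_succ_succ, delay_zero, Nat.sub_zero]
    congr 1
    split_ifs with h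
    · rw [ih, Nat.sub_add_cancel h]
      exact sum_congr rfl fun j _ => by rw [Nat.sub_sub, Nat.add_comm 1 j]
    · simp [Nat.eq_zero_of_not_pos h]

end Delay

section Matrices

variable {m n R : Type*} [Fintype n] [NonAssocSemiring R]

lemma mulVec_apply_of_row_eq_zero (A : Matrix m n R) (v : n → R) (p : m)
    (hA : ∀ q, A p q = 0) : (A *ᵥ v) p = 0 := by
  simp [mulVec, dotProduct, hA]

lemma mulVec_apply_of_row_eq_single [DecidableEq n] (A : Matrix m n R) (v : n → R) (p : m)
    (q₀ : n) (hA : ∀ q, A p q = if q = q₀ then 1 else 0) : (A *ᵥ v) p = v q₀ := by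
  simp [mulVec, dotProduct, hA]

end Matrices

section Realization

variable {κ ι R : Type*} [Fintype ι] [NonAssocSemiring R] {n : ℕ}

lemma upperShift_mulVec_apply [DecidableEq ι] (A : Matrix (Fin n × ι) (Fin n × ι) R)
    (hA : ∀ p q, A p q = if (q.1 : ℕ) = p.1 + 1 ∧ p.2 = q.2 then 1 else 0)
    (v : Fin n × ι → R) (p : Fin n × ι) :
    (A *ᵥ v) p = if h : (p.1 : ℕ) + 1 < n then v (⟨p.1 + 1, h⟩, p.2) else 0 := by
  split_ifs with h
  · refine mulVec_apply_of_row_eq_single A v p _ fun q => ?_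
    rw [hA]
    refine if_congr ?_ rfl rfl
    simp only [Prod.ext_iff, Fin.ext_iff]
    constructor <;> rintro ⟨h₁, h₂⟩ <;> exact ⟨h₁, h₂.symm⟩
  · refine mulVec_apply_of_row_eq_zero A v p fun q => ?_
    rw [hA, if_neg]
    omega

lemma lowerShift_mulVec_apply [DecidableEq ι] (A : Matrix (Fin n × ι) (Fin n × ι) R)
    (hA : ∀ p q, A p q = if (p.1 : ℕ) = q.1 + 1 ∧ p.2 = q.2 then 1 else 0)
    (v : Fin n × ι → R) (p : Fin n × ι) :
    (A *ᵥ v) p = if h : 0 < (p.1 : ℕ) then v (⟨p.1 - 1, by omega⟩, p.2) else 0 := by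
  split_ifs with h
  · refine mulVec_apply_of_row_eq_single A v p _ fun q => ?_
    rw [hA]
    refine if_congr ?_ rfl rfl
    simp only [Prod.ext_iff, Fin.ext_iff]
    constructor <;> rintro ⟨h₁, h₂⟩ <;> exact ⟨by omega, h₂.symm⟩
  · refine mulVec_apply_of_row_eq_zero A v p fun q => ?_
    rw [hA, if_neg]
    omega

lemma delayLine_of_upperShift [DecidableEq ι] (A : Matrix (Fin n × ι) (Fin n × ι) R)
    (B : Matrix (Fin n × ι) ι R)
    (hA : ∀ p q, A p q = if (q.1 : ℕ) = p.1 + 1 ∧ p.2 = q.2 then 1 else 0)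
    (hB : ∀ p c, B p c = if (p.1 : ℕ) = n - 1 ∧ p.2 = c then 1 else 0)
    (x : ℕ → Fin n × ι → R) (w : ℕ → ι → R) (h₀ : x 0 = 0)
    (hx : ∀ i, x (i + 1) = A *ᵥ x i + B *ᵥ w i) (i : ℕ) (ℓ : Fin n) :
    (fun c => x i (ℓ, c)) = delay w (n - ℓ) i := by
  funext c
  rw [delay_apply]
  refine shiftRegister_eq_delay (fun i ℓ => x i (ℓ, c)) _ (by simp [h₀]) (fun i ℓ => ?_) i ℓ
  simp only [hx, Pi.add_apply, upperShift_mulVec_apply A hA]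
  split_ifs with h
  · rw [mulVec_apply_of_row_eq_zero B _ _ fun c' => by rw [hB, if_neg]; dsimp only; omega,
      add_zero]
  · refine (zero_add _).trans (mulVec_apply_of_row_eq_single B _ _ c fun c' => ?_)
    rw [hB]
    exact if_congr (by simp [show (ℓ : ℕ) = n - 1 by omega, eq_comm]) rfl rfl

lemma accumulator_of_lowerShift [DecidableEq ι] (A : Matrix (Fin n × ι) (Fin n × ι) R)
    (hA : ∀ p q, A p q = if (p.1 : ℕ) = q.1 + 1 ∧ p.2 = q.2 then 1 else 0)
    (x e : ℕ → Fin n × ι → R) (g : ℕ → ℕ → ι → R) (he : ∀ i k, (fun o => e i (k, o)) = g i k)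
    (h₀ : x 0 = 0) (hx : ∀ i, x (i + 1) = A *ᵥ x i + e i) (i : ℕ) (k : Fin n) :
    (fun o => x i (k, o)) = ∑ j ∈ range (k + 1), delay (fun m => g m (k - j)) (j + 1) i := by
  refine accumulator_eq_sum_delay (fun i k o => x i (k, o)) g
    (fun _ => funext fun _ => by simp [h₀]) (fun i k => ?_) i k
  funext o
  simp only [hx, Pi.add_apply, lowerShift_mulVec_apply A hA, ← he]
  split_ifs <;> rfl

def firConv (L : ℕ → Matrix κ ι R) (n : ℕ) (w : ℕ → ι → R) (i : ℕ) : κ → R :=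
  ∑ t ∈ range (n + 1), L t *ᵥ delay w t i

lemma mulVec_delayLine_add_eq_firConv (L : ℕ → Matrix κ ι R) (A : Matrix κ (Fin n × ι) R)
    (B : Matrix κ ι R) (hA : ∀ o q, A o q = L (n - q.1) o q.2) (hB : B = L 0)
    (w : ℕ → ι → R) (i : ℕ) (s : Fin n × ι → R)
    (hs : ∀ ℓ, (fun c => s (ℓ, c)) = delay w (n - ℓ) i) :
    A *ᵥ s + B *ᵥ w i = firConv L n w i := by
  set T : ℕ → κ → R := fun t => L t *ᵥ delay w t i
  have hAs : A *ᵥ s = ∑ ℓ ∈ range n, T (n - ℓ) := by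
    rw [← Fin.sum_univ_eq_sum_range (fun ℓ => T (n - ℓ))]
    ext o
    simp only [mulVec, dotProduct, Fintype.sum_prod_type, hA, T, Finset.sum_apply, ← hs]
  have hreflect : ∑ ℓ ∈ range n, T (n - ℓ) = ∑ t ∈ range n, T (t + 1) := by
    rw [← sum_range_reflect]
    exact sum_congr rfl fun t ht => by rw [mem_range] at ht; congr 1; omega
  rw [firConv, sum_range_succ', hAs, hreflect, hB]
  simp [T]

lemma delay_firConv (L : ℕ → Matrix κ ι R) (n : ℕ) (u : ℕ → ℕ → ι → R) (t i₁ i₂ : ℕ) :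
    delay (fun m => firConv L n (u m) i₂) t i₁ = ∑ t₂ ∈ range (n + 1),
      if t ≤ i₁ ∧ t₂ ≤ i₂ then L t₂ *ᵥ u (i₁ - t) (i₂ - t₂) else 0 := by
  unfold delay firConv
  split_ifs with h
  · exact sum_congr rfl fun t₂ _ => by by_cases h₂ : t₂ ≤ i₂ <;> simp [delay, h, h₂]
  · simp [h]

end Realization

theorem stmt11_general (r₁ r₂ cin cout : ℕ) (hr₁ : 0 < r₁)
    (K : ℕ → ℕ → Matrix (Fin cout) (Fin cin) ℝ) (b : Fin cout → ℝ)
    (A₁₁ : Matrix (Fin r₁ × Fin cout) (Fin r₁ × Fin cout) ℝ)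
    (A₁₂ : Matrix (Fin r₁ × Fin cout) (Fin r₂ × Fin cin) ℝ)
    (A₂₂ : Matrix (Fin r₂ × Fin cin) (Fin r₂ × Fin cin) ℝ)
    (B₁ : Matrix (Fin r₁ × Fin cout) (Fin cin) ℝ)
    (B₂ : Matrix (Fin r₂ × Fin cin) (Fin cin) ℝ)
    (C₁ : Matrix (Fin cout) (Fin r₁ × Fin cout) ℝ)
    (C₂ : Matrix (Fin cout) (Fin r₂ × Fin cin) ℝ)
    (D : Matrix (Fin cout) (Fin cin) ℝ)
    (hA₁₁ : ∀ p q, A₁₁ p q = if (p.1 : ℕ) = (q.1 : ℕ) + 1 ∧ p.2 = q.2 then 1 else 0)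
    (hA₁₂ : ∀ p q, A₁₂ p q = K (r₁ - (p.1 : ℕ)) (r₂ - (q.1 : ℕ)) p.2 q.2)
    (hA₂₂ : ∀ p q, A₂₂ p q = if (q.1 : ℕ) = (p.1 : ℕ) + 1 ∧ p.2 = q.2 then 1 else 0)
    (hB₁ : ∀ p c, B₁ p c = K (r₁ - (p.1 : ℕ)) 0 p.2 c)
    (hB₂ : ∀ p c, B₂ p c = if (p.1 : ℕ) = r₂ - 1 ∧ p.2 = c then 1 else 0)
    (hC₁ : ∀ o p, C₁ o p = if (p.1 : ℕ) = r₁ - 1 ∧ o = p.2 then 1 else 0)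
    (hC₂ : ∀ o p, C₂ o p = K 0 (r₂ - (p.1 : ℕ)) o p.2)
    (hD : D = K 0 0)
    (u : ℕ → ℕ → Fin cin → ℝ)
    (x₁ : ℕ → ℕ → Fin r₁ × Fin cout → ℝ)
    (x₂ : ℕ → ℕ → Fin r₂ × Fin cin → ℝ)
    (y : ℕ → ℕ → Fin cout → ℝ)
    (hx₁0 : ∀ i₂, x₁ 0 i₂ = 0) (hx₂0 : ∀ i₁, x₂ i₁ 0 = 0)
    (hx₁ : ∀ i₁ i₂, x₁ (i₁ + 1) i₂ =
      A₁₁.mulVec (x₁ i₁ i₂) + A₁₂.mulVec (x₂ i₁ i₂) + B₁.mulVec (u i₁ i₂))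
    (hx₂ : ∀ i₁ i₂, x₂ i₁ (i₂ + 1) = A₂₂.mulVec (x₂ i₁ i₂) + B₂.mulVec (u i₁ i₂))
    (hy : ∀ i₁ i₂, y i₁ i₂ =
      b + C₁.mulVec (x₁ i₁ i₂) + C₂.mulVec (x₂ i₁ i₂) + D.mulVec (u i₁ i₂)) :
    ∀ i₁ i₂, y i₁ i₂ = b + ∑ t₁ ∈ Finset.range (r₁ + 1), ∑ t₂ ∈ Finset.range (r₂ + 1),
      if t₁ ≤ i₁ ∧ t₂ ≤ i₂ then (K t₁ t₂).mulVec (u (i₁ - t₁) (i₂ - t₂)) else 0 := by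
  intro i₁ i₂
  have hx₂_delay (m : ℕ) := delayLine_of_upperShift A₂₂ B₂ hA₂₂ hB₂ (x₂ m) (u m) (hx₂0 m) (hx₂ m)
  have hx₁_input (m : ℕ) (k : Fin r₁) :
      (fun o => (A₁₂ *ᵥ x₂ m i₂ + B₁ *ᵥ u m i₂) (k, o)) = firConv (K (r₁ - k)) r₂ (u m) i₂ :=
    mulVec_delayLine_add_eq_firConv (K (r₁ - k)) (A₁₂.submatrix (Prod.mk k) id)
      (B₁.submatrix (Prod.mk k) id) (fun o q => hA₁₂ (k, o) q) (Matrix.ext fun o c => hB₁ (k, o) c) _ _ _ (hx₂_delay m i₂)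
  have hx₁_last := accumulator_of_lowerShift A₁₁ hA₁₁ (fun i => x₁ i i₂) _
    (fun m k => firConv (K (r₁ - k)) r₂ (u m) i₂) hx₁_input (hx₁0 i₂)
    (fun i => by rw [hx₁, add_assoc]) i₁ ⟨r₁ - 1, by omega⟩
  have hC₁_x₁ : C₁ *ᵥ x₁ i₁ i₂ = fun o => x₁ i₁ i₂ (⟨r₁ - 1, by omega⟩, o) :=
    funext fun o => mulVec_apply_of_row_eq_single _ _ _ _ fun p => by
      rw [hC₁]; exact if_congr (by simp [Prod.ext_iff, Fin.ext_iff, eq_comm]) rfl rfl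
  calc y i₁ i₂ = b + (fun o => x₁ i₁ i₂ (⟨r₁ - 1, by omega⟩, o)) + firConv (K 0) r₂ (u i₁) i₂ := by
        rw [hy, add_assoc _ (C₂ *ᵥ _), hC₁_x₁, mulVec_delayLine_add_eq_firConv _ C₂ D
          (fun o q => hC₂ o q) hD _ _ _ (hx₂_delay i₁ i₂)]
    _ = b + ∑ t₁ ∈ range (r₁ + 1), delay (fun m => firConv (K t₁) r₂ (u m) i₂) t₁ i₁ := by
        rw [hx₁_last, sum_range_succ' _ r₁, delay_zero, Nat.sub_add_cancel hr₁, add_assoc]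
        congr 2
        refine sum_congr rfl fun j hj => ?_
        rw [mem_range] at hj
        rw [show r₁ - (r₁ - 1 - j) = j + 1 by omega]
    _ = _ := by simp_rw [delay_firConv]

/-- The Roesser realization of Theorem 1 with zero boundary conditions reproduces the
2-D convolution output y[i₁,i₂] = b + ∑_{t₁,t₂} K[t₁,t₂] u[i₁−t₁,i₂−t₂]. -/
theorem stmt11 (r₁ r₂ cin cout : ℕ) (hr₁ : 0 < r₁) (hr₂ : 0 < r₂)
    (K : ℕ → ℕ → Matrix (Fin cout) (Fin cin) ℝ) (b : Fin cout → ℝ)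
    (A₁₁ : Matrix (Fin r₁ × Fin cout) (Fin r₁ × Fin cout) ℝ)
    (A₁₂ : Matrix (Fin r₁ × Fin cout) (Fin r₂ × Fin cin) ℝ)
    (A₂₂ : Matrix (Fin r₂ × Fin cin) (Fin r₂ × Fin cin) ℝ)
    (B₁ : Matrix (Fin r₁ × Fin cout) (Fin cin) ℝ)
    (B₂ : Matrix (Fin r₂ × Fin cin) (Fin cin) ℝ)
    (C₁ : Matrix (Fin cout) (Fin r₁ × Fin cout) ℝ)
    (C₂ : Matrix (Fin cout) (Fin r₂ × Fin cin) ℝ)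
    (D : Matrix (Fin cout) (Fin cin) ℝ)
    (hA₁₁ : ∀ p q, A₁₁ p q = if (p.1 : ℕ) = (q.1 : ℕ) + 1 ∧ p.2 = q.2 then 1 else 0)
    (hA₁₂ : ∀ p q, A₁₂ p q = K (r₁ - (p.1 : ℕ)) (r₂ - (q.1 : ℕ)) p.2 q.2)
    (hA₂₂ : ∀ p q, A₂₂ p q = if (q.1 : ℕ) = (p.1 : ℕ) + 1 ∧ p.2 = q.2 then 1 else 0)
    (hB₁ : ∀ p c, B₁ p c = K (r₁ - (p.1 : ℕ)) 0 p.2 c)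
    (hB₂ : ∀ p c, B₂ p c = if (p.1 : ℕ) = r₂ - 1 ∧ p.2 = c then 1 else 0)
    (hC₁ : ∀ o p, C₁ o p = if (p.1 : ℕ) = r₁ - 1 ∧ o = p.2 then 1 else 0)
    (hC₂ : ∀ o p, C₂ o p = K 0 (r₂ - (p.1 : ℕ)) o p.2)
    (hD : D = K 0 0)
    (u : ℕ → ℕ → Fin cin → ℝ)
    (x₁ : ℕ → ℕ → Fin r₁ × Fin cout → ℝ)
    (x₂ : ℕ → ℕ → Fin r₂ × Fin cin → ℝ)
    (y : ℕ → ℕ → Fin cout → ℝ)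
    (hx₁0 : ∀ i₂, x₁ 0 i₂ = 0) (hx₂0 : ∀ i₁, x₂ i₁ 0 = 0)
    (hx₁ : ∀ i₁ i₂, x₁ (i₁ + 1) i₂ =
      A₁₁.mulVec (x₁ i₁ i₂) + A₁₂.mulVec (x₂ i₁ i₂) + B₁.mulVec (u i₁ i₂))
    (hx₂ : ∀ i₁ i₂, x₂ i₁ (i₂ + 1) = A₂₂.mulVec (x₂ i₁ i₂) + B₂.mulVec (u i₁ i₂))
    (hy : ∀ i₁ i₂, y i₁ i₂ =
      b + C₁.mulVec (x₁ i₁ i₂) + C₂.mulVec (x₂ i₁ i₂) + D.mulVec (u i₁ i₂)) :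
    ∀ i₁ i₂, y i₁ i₂ = b + ∑ t₁ ∈ Finset.range (r₁ + 1), ∑ t₂ ∈ Finset.range (r₂ + 1),
      if t₁ ≤ i₁ ∧ t₂ ≤ i₂ then (K t₁ t₂).mulVec (u (i₁ - t₁) (i₂ - t₂)) else 0 :=
  stmt11_general r₁ r₂ cin cout hr₁ K b A₁₁ A₁₂ A₂₂ B₁ B₂ C₁ C₂ D hA₁₁ hA₁₂ hA₂₂ hB₁ hB₂ hC₁ hC₂ hD
    u x₁ x₂ y hx₁0 hx₂0 hx₁ hx₂ hy
end
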